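/- arXiv:1604.08910 — 2 statements merged into one kernel-verified Lean document; each statement's English description precedes it below -/
import Mathlib

section
/- Let n ≥ 1 and let G be a symmetric real n×n matrix with zero diagonal. The public-good provision game with parameters (G, q) has exactly one Nash equilibrium for every q ∈ ℝⁿ if and only if every eigenvalue of G is strictly greater than −1 (equivalently, if and only if I + G is positive definite). -/
/-!
With `M = 1 + G` and `w = M x - q`, the zero diagonal turns the equilibrium condition into the
linear complementarity problem `x ≥ 0, w ≥ 0, xᵢ wᵢ = 0`.

If `M` is positive definite, two solutions `x, y` satisfy
`(x - y) ⬝ M (x - y) = ∑ (xᵢ - yᵢ)(wᵢ - w'ᵢ) = -∑ (xᵢ w'ᵢ + yᵢ wᵢ) ≤ 0`, so `x = y`. Since `M` is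
also symmetric, the coercive quadratic `x ⬝ M x - 2 q ⬝ x` has a minimiser on the nonnegative
orthant, and the first-order conditions along the coordinate directions are exactly the
complementarity conditions.

Conversely, if `G v = μ v` with `v ≠ 0` and `μ ≤ -1`, then `vᵢ (M v)ᵢ = (1 + μ) vᵢ² ≤ 0`, and for
such a sign-reversing `v` both `v⁺` and `v⁻` solve the problem for `q = min (M v⁺) (M v⁻)`.
Finally, for symmetric `G`, `1 + G` is positive definite iff every eigenvalue of `G` exceeds `-1`.
-/

open Matrix Finset

/-- Nash equilibrium of the public-good provision game with parameters `(G, q)`. -/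
def NashEq {n : ℕ} (G : Matrix (Fin n) (Fin n) ℝ) (q x : Fin n → ℝ) : Prop :=
  ∀ i, x i = max 0 (q i - ∑ j ∈ Finset.univ.erase i, G i j * x j)

/-- `μ ∈ ℝ` is a (real) eigenvalue of the real matrix `G`. -/
def HasRealEigenvalue {n : ℕ} (G : Matrix (Fin n) (Fin n) ℝ) (μ : ℝ) : Prop :=
  ∃ v : Fin n → ℝ, v ≠ 0 ∧ G.mulVec v = μ • v

section LCP

variable {ι : Type*} [Fintype ι]

-- `q` enters with the sign it has in the game: `w = M x - q`, not the textbook `w = q + M x`.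
def IsLCPSolution (M : Matrix ι ι ℝ) (q x : ι → ℝ) : Prop :=
  ∀ i, 0 ≤ x i ∧ 0 ≤ (M *ᵥ x - q) i ∧ x i * (M *ᵥ x - q) i = 0

def lcpPotential (M : Matrix ι ι ℝ) (q v : ι → ℝ) : ℝ :=
  v ⬝ᵥ M *ᵥ v - 2 * q ⬝ᵥ v

variable {M : Matrix ι ι ℝ}

theorem IsLCPSolution.eq (hM : ∀ v, v ≠ 0 → 0 < v ⬝ᵥ M *ᵥ v) {q x y : ι → ℝ}
    (hx : IsLCPSolution M q x) (hy : IsLCPSolution M q y) : x = y := by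
  by_contra hne
  have hsum : (x - y) ⬝ᵥ M *ᵥ (x - y) =
      ∑ i, (x i - y i) * ((M *ᵥ x - q) i - (M *ᵥ y - q) i) := by
    simp only [dotProduct, mulVec_sub, Pi.sub_apply, sub_sub_sub_cancel_right]
  have hnonpos : (x - y) ⬝ᵥ M *ᵥ (x - y) ≤ 0 := by
    rw [hsum]
    refine Finset.sum_nonpos fun i _ => ?_
    obtain ⟨hx₀, hxw, hxc⟩ := hx i
    obtain ⟨hy₀, hyw, hyc⟩ := hy i
    nlinarith [mul_nonneg hx₀ hyw, mul_nonneg hy₀ hxw]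
  exact (hM _ (sub_ne_zero.mpr hne)).not_ge hnonpos

theorem exists_pos_mul_norm_sq_le_dotProduct_mulVec (hM : ∀ v, v ≠ 0 → 0 < v ⬝ᵥ M *ᵥ v) :
    ∃ c > 0, ∀ v, c * ‖v‖ ^ 2 ≤ v ⬝ᵥ M *ᵥ v := by
  rcases isEmpty_or_nonempty ι with hι | hι
  · exact ⟨1, one_pos, fun v => by simp [Subsingleton.elim v 0]⟩
  have hQ : Continuous fun v : ι → ℝ => v ⬝ᵥ M *ᵥ v :=
    continuous_id.dotProduct (continuous_const.matrix_mulVec continuous_id)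
  obtain ⟨u, hu, hmin⟩ := (isCompact_sphere (0 : ι → ℝ) 1).exists_isMinOn
    (NormedSpace.sphere_nonempty.mpr zero_le_one) hQ.continuousOn
  refine ⟨u ⬝ᵥ M *ᵥ u, hM u (ne_zero_of_mem_unit_sphere ⟨u, hu⟩), fun v => ?_⟩
  rcases eq_or_ne v 0 with rfl | hv
  · simp
  have hv' : ‖v‖⁻¹ • v ∈ Metric.sphere (0 : ι → ℝ) 1 := by
    simp [norm_smul, norm_ne_zero_iff.mpr hv]
  calc u ⬝ᵥ M *ᵥ u * ‖v‖ ^ 2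
      ≤ (‖v‖⁻¹ • v) ⬝ᵥ M *ᵥ (‖v‖⁻¹ • v) * ‖v‖ ^ 2 := by
        gcongr
        exact hmin hv'
    _ = v ⬝ᵥ M *ᵥ v := by
        simp only [mulVec_smul, dotProduct_smul, smul_dotProduct, smul_eq_mul]
        field_simp

theorem exists_isMinOn_lcpPotential (hM : ∀ v, v ≠ 0 → 0 < v ⬝ᵥ M *ᵥ v) (q : ι → ℝ) :
    ∃ x ∈ Set.Ici 0, IsMinOn (lcpPotential M q) (Set.Ici 0) x := by
  obtain ⟨c, hc, hcoer⟩ := exists_pos_mul_norm_sq_le_dotProduct_mulVec hM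
  set C := ∑ i, |q i|
  have hlin : ∀ v, q ⬝ᵥ v ≤ C * ‖v‖ := fun v => by
    rw [dotProduct, Finset.sum_mul]
    refine Finset.sum_le_sum fun i _ => ?_
    calc q i * v i ≤ |q i| * |v i| := by rw [← abs_mul]; exact le_abs_self _
      _ ≤ |q i| * ‖v‖ := by gcongr; exact norm_le_pi_norm v i
  have hcont : Continuous (lcpPotential M q) :=
    (continuous_id.dotProduct (continuous_const.matrix_mulVec continuous_id)).sub
      (continuous_const.mul (continuous_const.dotProduct continuous_id))
  refine hcont.continuousOn.exists_isMinOn' isClosed_Ici Set.self_mem_Ici ?_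
  have hfar : ∀ᶠ v in Filter.cocompact (ι → ℝ), 2 * C / c ≤ ‖v‖ :=
    tendsto_norm_cocompact_atTop.eventually_ge_atTop _
  refine (hfar.filter_mono inf_le_left).mono fun v hv => ?_
  rw [div_le_iff₀ hc] at hv
  have h0 : lcpPotential M q 0 = 0 := by simp [lcpPotential]
  rw [h0, lcpPotential]
  nlinarith [hcoer v, hlin v, norm_nonneg v]

theorem lcpPotential_add_smul (hM : M.IsSymm) (q x d : ι → ℝ) (t : ℝ) :
    lcpPotential M q (x + t • d) =
      lcpPotential M q x + t * (2 * d ⬝ᵥ (M *ᵥ x - q)) + t ^ 2 * d ⬝ᵥ M *ᵥ d := by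
  have hxd : x ⬝ᵥ M *ᵥ d = d ⬝ᵥ M *ᵥ x := by
    rw [dotProduct_mulVec, ← mulVec_transpose, hM.eq, dotProduct_comm]
  simp only [lcpPotential, mulVec_add, mulVec_smul, dotProduct_add, add_dotProduct,
    dotProduct_smul, smul_dotProduct, smul_eq_mul, dotProduct_sub, hxd, dotProduct_comm q d]
  ring

theorem nonneg_and_mul_eq_zero_of_forall_le_quadratic {a b c : ℝ} (ha : 0 ≤ a)
    (h : ∀ t, -a ≤ t → 0 ≤ t * b + t ^ 2 * c) : 0 ≤ b ∧ a * b = 0 := by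
  have hb : 0 ≤ b := by
    by_contra! hb
    have hc : 0 < c := by linarith [h 1 (by linarith)]
    have := h (-b / (2 * c)) (by linarith [div_pos (neg_pos.mpr hb) (by positivity : 0 < 2 * c)])
    field_simp at this
    nlinarith
  refine ⟨hb, ?_⟩
  by_contra hab
  have ha' : 0 < a := ha.lt_of_ne (Ne.symm (left_ne_zero_of_mul hab))
  have hb' : 0 < b := hb.lt_of_ne (Ne.symm (right_ne_zero_of_mul hab))
  have hc : 0 < c := by nlinarith [h (-a) le_rfl]
  have hs : 0 < min a (b / (2 * c)) := lt_min ha' (by positivity)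
  have := h (-min a (b / (2 * c))) (neg_le_neg (min_le_left _ _))
  have hsc : min a (b / (2 * c)) * c ≤ b / 2 := by
    have := min_le_right a (b / (2 * c))
    rw [le_div_iff₀ (by positivity)] at this
    linarith
  nlinarith

theorem IsMinOn.isLCPSolution_of_lcpPotential (hM : M.IsSymm) {q x : ι → ℝ}
    (hx : x ∈ Set.Ici 0) (hmin : IsMinOn (lcpPotential M q) (Set.Ici 0) x) :
    IsLCPSolution M q x := by
  classical
  intro i
  have hstep : ∀ t, -x i ≤ t → 0 ≤ t * (2 * (M *ᵥ x - q) i) + t ^ 2 * M i i := by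
    intro t ht
    have hmem : x + t • Pi.single i 1 ∈ Set.Ici 0 := by
      intro j
      rcases eq_or_ne j i with rfl | hj
      · simp only [Pi.zero_apply, Pi.add_apply, Pi.smul_apply, Pi.single_eq_same, smul_eq_mul]
        linarith
      · simpa [hj] using hx j
    have := hmin hmem
    simp only [Set.mem_ofPred_eq, lcpPotential_add_smul hM, single_dotProduct, one_mul,
      mulVec_single, MulOpposite.op_one, one_smul, col_apply] at this
    linarith
  obtain ⟨hw, hxw⟩ := nonneg_and_mul_eq_zero_of_forall_le_quadratic (hx i) hstep
  exact ⟨hx i, by linarith, by linarith⟩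

theorem existsUnique_isLCPSolution_of_posDef (hM : M.PosDef) (q : ι → ℝ) :
    ∃! x, IsLCPSolution M q x := by
  have hQ : ∀ v, v ≠ 0 → 0 < v ⬝ᵥ M *ᵥ v := fun v hv => by
    simpa using hM.dotProduct_mulVec_pos hv
  obtain ⟨x, hx, hmin⟩ := exists_isMinOn_lcpPotential hQ q
  have hsol := hmin.isLCPSolution_of_lcpPotential (isHermitian_iff_isSymm.mp hM.isHermitian) hx
  exact ⟨x, hsol, fun y hy => hy.eq hQ hsol⟩

theorem isLCPSolution_posPart {v : ι → ℝ} (hv : ∀ i, v i * (M *ᵥ v) i ≤ 0) :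
    IsLCPSolution M (M *ᵥ v⁺ ⊓ M *ᵥ v⁻) v⁺ := by
  intro i
  have hw : (M *ᵥ v⁺ - M *ᵥ v⁺ ⊓ M *ᵥ v⁻) i =
      (M *ᵥ v⁺) i - min ((M *ᵥ v⁺) i) ((M *ᵥ v⁻) i) := rfl
  refine ⟨posPart_nonneg (v i), ?_, ?_⟩
  · rw [hw]
    linarith [min_le_left ((M *ᵥ v⁺) i) ((M *ᵥ v⁻) i)]
  rcases le_or_gt (v i) 0 with hvi | hvi
  · rw [Pi.posPart_apply, posPart_eq_zero.mpr hvi, zero_mul]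
  · have hMv : (M *ᵥ v⁺) i ≤ (M *ᵥ v⁻) i := by
      have := nonpos_of_mul_nonpos_right (hv i) hvi
      rwa [← posPart_sub_negPart v, mulVec_sub, Pi.sub_apply, sub_nonpos] at this
    rw [hw, min_eq_left hMv, sub_self, mul_zero]

theorem exists_isLCPSolution_ne_of_sign_reversing {v : ι → ℝ} (hv₀ : v ≠ 0)
    (hv : ∀ i, v i * (M *ᵥ v) i ≤ 0) :
    ∃ q x y, IsLCPSolution M q x ∧ IsLCPSolution M q y ∧ x ≠ y := by
  refine ⟨_, v⁺, v⁻, isLCPSolution_posPart hv, ?_, fun h => hv₀ ?_⟩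
  · have := isLCPSolution_posPart (M := M) (v := -v) fun i => by simpa [mulVec_neg] using hv i
    rwa [posPart_neg, negPart_neg, inf_comm] at this
  · rw [← posPart_sub_negPart v, h, sub_self]

end LCP

theorem eq_max_zero_sub_iff {s w : ℝ} : s = max 0 (s - w) ↔ 0 ≤ s ∧ 0 ≤ w ∧ s * w = 0 := by
  grind

theorem nashEq_iff_isLCPSolution {n : ℕ} {G : Matrix (Fin n) (Fin n) ℝ}
    (hdiag : ∀ i, G i i = 0) {q x : Fin n → ℝ} : NashEq G q x ↔ IsLCPSolution (1 + G) q x := by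
  refine forall_congr' fun i => ?_
  have hsum : ∑ j ∈ univ.erase i, G i j * x j = (G *ᵥ x) i := by
    rw [mulVec, dotProduct, ← Finset.sum_erase_add _ _ (mem_univ i), hdiag, zero_mul, add_zero]
  have hw : q i - (G *ᵥ x) i = x i - ((1 + G) *ᵥ x - q : Fin n → ℝ) i := by
    simp only [add_mulVec, one_mulVec, Pi.sub_apply, Pi.add_apply]
    ring
  rw [hsum, hw]
  exact eq_max_zero_sub_iff

theorem posDef_one_add_of_forall_hasRealEigenvalue {n : ℕ} {G : Matrix (Fin n) (Fin n) ℝ}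
    (hG : G.IsHermitian) (h : ∀ μ, HasRealEigenvalue G μ → -1 < μ) : (1 + G).PosDef := by
  have hA := isHermitian_one.add hG
  refine hA.posDef_iff_eigenvalues_pos.mpr fun i => ?_
  set u : Fin n → ℝ := ⇑(hA.eigenvectorBasis i)
  have hu : u ≠ 0 := by
    simpa [u] using hA.eigenvectorBasis.orthonormal.ne_zero i
  have hGu : G *ᵥ u = (hA.eigenvalues i - 1) • u := by
    rw [sub_smul, one_smul, ← hA.mulVec_eigenvectorBasis i, add_mulVec, one_mulVec,
      add_sub_cancel_left]
  linarith [h _ ⟨u, hu, hGu⟩]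

theorem unique_nash_iff_eig_gt_neg_one_symm_general (n : ℕ)
    (G : Matrix (Fin n) (Fin n) ℝ) (hdiag : ∀ i, G i i = 0) (hsymm : G.IsSymm) :
    ((∀ q : Fin n → ℝ, ∃! x : Fin n → ℝ, NashEq G q x) ↔
      (∀ μ : ℝ, HasRealEigenvalue G μ → -1 < μ)) ∧
    ((∀ q : Fin n → ℝ, ∃! x : Fin n → ℝ, NashEq G q x) ↔ (1 + G).PosDef) := by
  simp only [nashEq_iff_isLCPSolution hdiag]
  have hTFAE : [∀ q, ∃! x, IsLCPSolution (1 + G) q x,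
      ∀ μ, HasRealEigenvalue G μ → -1 < μ, (1 + G).PosDef].TFAE := by
    tfae_have 1 → 2 := by
      rintro hU μ ⟨v, hv₀, hGv⟩
      by_contra! hμ
      have hv : ∀ i, v i * ((1 + G) *ᵥ v) i ≤ 0 := fun i => by
        simp only [add_mulVec, one_mulVec, hGv, Pi.add_apply, Pi.smul_apply, smul_eq_mul]
        nlinarith [sq_nonneg (v i)]
      obtain ⟨q, x, y, hx, hy, hxy⟩ := exists_isLCPSolution_ne_of_sign_reversing hv₀ hv
      exact hxy ((hU q).unique hx hy)
    tfae_have 2 → 3 :=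
      posDef_one_add_of_forall_hasRealEigenvalue (isHermitian_iff_isSymm.mpr hsymm)
    tfae_have 3 → 1 := existsUnique_isLCPSolution_of_posDef
    tfae_finish
  exact ⟨hTFAE.out 0 1, hTFAE.out 0 2⟩

theorem unique_nash_iff_eig_gt_neg_one_symm (n : ℕ) (hn : 1 ≤ n)
    (G : Matrix (Fin n) (Fin n) ℝ) (hdiag : ∀ i, G i i = 0) (hsymm : G.IsSymm) :
    ((∀ q : Fin n → ℝ, ∃! x : Fin n → ℝ, NashEq G q x) ↔
      (∀ μ : ℝ, HasRealEigenvalue G μ → -1 < μ)) ∧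
    ((∀ q : Fin n → ℝ, ∃! x : Fin n → ℝ, NashEq G q x) ↔ (1 + G).PosDef) :=
  unique_nash_iff_eig_gt_neg_one_symm_general n G hdiag hsymm
end

section
/- Let n ≥ 1 and let G be a real n×n matrix with zero diagonal all of whose off-diagonal entries are nonpositive (a Z-matrix). Then the public-good provision game with parameters (G, q) has exactly one Nash equilibrium for every q ∈ ℝⁿ if and only if every real eigenvalue of G is strictly greater than −1 (equivalently, |λ_min(G)| < 1). -/
/-!
Put `B = -G`, which is entrywise nonnegative; the equilibria are the fixed points of the monotone
map `x ↦ (q + B x)⁺`. Everything turns on whether some nonzero `d ≥ 0` satisfies `d ≤ B d`.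

If there is no such `d`, then `|x - y| ≤ B |x - y|` forces any two equilibria to coincide, and the
same argument applied to negative parts shows that `u - B u = q⁺` has a solution `u ≥ 0`; the
box `[0, u]` is mapped into itself, so Tarski's theorem gives an equilibrium.

If there is such a `d`, let `t*` be the supremum of the levels `t` with `t d ≤ B d` for some
`d ≥ 0`, `d ≠ 0` (Collatz–Wielandt). Just above `t*` the resolvent `(t - B)⁻¹` is positive and
blows up, and its normalized values converge to an eigenvector for `t* ≥ 1`. Conversely, an
eigenvector `B v = t v` with `t ≥ 1` makes both `v⁺` and `v⁻` equilibria for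
`q = |v| - (B v⁺ ⊔ B v⁻)`.
-/

open Matrix Finset

theorem Monotone.exists_isFixedPt {α : Type*} [ConditionallyCompleteLattice α] {f : α → α}
    (hf : Monotone f) {a b : α} (hab : a ≤ b) (ha : a ≤ f a) (hb : f b ≤ b) :
    ∃ x, Function.IsFixedPt f x := by
  set S := {y | y ≤ b ∧ y ≤ f y}
  have hS : S.Nonempty := ⟨a, hab, ha⟩
  have hbdd : BddAbove S := ⟨b, fun y hy => hy.1⟩
  have hxb : sSup S ≤ b := csSup_le hS fun y hy => hy.1
  have hle : sSup S ≤ f (sSup S) :=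
    csSup_le hS fun y hy => hy.2.trans (hf (le_csSup hbdd hy))
  exact ⟨sSup S, le_antisymm (le_csSup hbdd ⟨(hf hxb).trans hb, hf hle⟩) hle⟩

namespace Matrix

variable {ι : Type*} [Fintype ι]

def HasSuperinvariantVector (B : Matrix ι ι ℝ) (t : ℝ) : Prop :=
  ∃ d : ι → ℝ, 0 ≤ d ∧ d ≠ 0 ∧ t • d ≤ B *ᵥ d

theorem mulVec_mono_of_nonneg {m n R : Type*} [Fintype n] [Semiring R] [PartialOrder R]
    [IsOrderedRing R] {B : Matrix m n R} (hB : ∀ i j, 0 ≤ B i j) : Monotone (B *ᵥ ·) :=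
  fun _ _ hvw i => dotProduct_le_dotProduct_of_nonneg_left hvw (hB i)

theorem abs_mulVec_le_mulVec_abs {m n R : Type*} [Fintype n] [Ring R] [LinearOrder R]
    [IsStrictOrderedRing R] {B : Matrix m n R} (hB : ∀ i j, 0 ≤ B i j) (z : n → R) :
    |B *ᵥ z| ≤ B *ᵥ |z| := fun i =>
  (Finset.abs_sum_le_sum_abs _ _).trans_eq <|
    Finset.sum_congr rfl fun j _ => by rw [abs_mul, abs_of_nonneg (hB i j)]; rfl

theorem HasSuperinvariantVector.le_sum_entries {B : Matrix ι ι ℝ} (hB : ∀ i j, 0 ≤ B i j)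
    {t : ℝ} (h : B.HasSuperinvariantVector t) : t ≤ ∑ i, ∑ j, B i j := by
  obtain ⟨d, hd0, hdne, hle⟩ := h
  obtain ⟨k, hk⟩ := Function.ne_iff.mp hdne
  obtain ⟨i, -, hi⟩ := Finset.exists_max_image Finset.univ d ⟨k, Finset.mem_univ k⟩
  have hdi : 0 < d i := ((hd0 k).lt_of_ne' hk).trans_le (hi k (Finset.mem_univ k))
  refine le_of_mul_le_mul_right ?_ hdi
  calc t * d i ≤ ∑ j, B i j * d j := hle i
    _ ≤ ∑ j, B i j * d i :=
      Finset.sum_le_sum fun j _ => mul_le_mul_of_nonneg_left (hi j (Finset.mem_univ j)) (hB i j)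
    _ ≤ (∑ i, ∑ j, B i j) * d i := by
      rw [← Finset.sum_mul]
      exact mul_le_mul_of_nonneg_right (Finset.single_le_sum
        (fun i _ => Finset.sum_nonneg fun j _ => hB i j) (Finset.mem_univ i)) hdi.le

-- If `x` has negative entries, its negative part `x⁻` would be a superinvariant vector at level `t`.
theorem nonneg_of_not_hasSuperinvariantVector {B : Matrix ι ι ℝ} (hB : ∀ i j, 0 ≤ B i j)
    {t : ℝ} (ht : ¬ B.HasSuperinvariantVector t) {x : ι → ℝ} (hx : 0 ≤ t • x - B *ᵥ x) :
    0 ≤ x := by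
  by_contra hneg
  refine ht ⟨x⁻, negPart_nonneg x, fun h => hneg (negPart_eq_zero.mp h), fun i => ?_⟩
  have hpos : 0 ≤ (B *ᵥ x⁺) i := by
    simpa using mulVec_mono_of_nonneg hB (posPart_nonneg x) i
  have hsplit : (B *ᵥ x) i = (B *ᵥ x⁺) i - (B *ᵥ x⁻) i := by
    rw [← Pi.sub_apply, ← mulVec_sub, posPart_sub_negPart]
  have hxi : 0 ≤ t * x i - (B *ᵥ x) i := hx i
  rcases le_or_gt 0 (x i) with h | h
  · simpa [negPart_eq_zero.mpr h] using mulVec_mono_of_nonneg hB (negPart_nonneg x) i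
  · simp only [Pi.smul_apply, Pi.negPart_apply, negPart_eq_neg.mpr h.le, smul_eq_mul]
    linarith

theorem exists_smul_sub_mulVec_eq {B : Matrix ι ι ℝ} (hB : ∀ i j, 0 ≤ B i j) {t : ℝ}
    (ht : ¬ B.HasSuperinvariantVector t) (c : ι → ℝ) : ∃ x, t • x - B *ᵥ x = c := by
  let f : (ι → ℝ) →ₗ[ℝ] ι → ℝ := t • LinearMap.id - B.mulVecLin
  have hf : ∀ x, f x = t • x - B *ᵥ x := fun _ => rfl
  have hinj : Function.Injective f := by
    refine (injective_iff_map_eq_zero f).mpr fun x hx => le_antisymm ?_ ?_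
    · refine neg_nonneg.mp (nonneg_of_not_hasSuperinvariantVector hB ht ?_)
      rw [mulVec_neg, smul_neg, neg_sub_neg, ← neg_sub, ← hf, hx, neg_zero]
    · exact nonneg_of_not_hasSuperinvariantVector hB ht (by rw [← hf, hx])
  exact LinearMap.injective_iff_surjective.mp hinj c

theorem exists_mem_stdSimplex_mulVec_eq_smul (B : Matrix ι ι ℝ) (t : ℝ)
    (h : ∀ ε > 0, ∃ v ∈ stdSimplex ℝ ι, ‖B *ᵥ v - t • v‖ ≤ ε) :
    ∃ v ∈ stdSimplex ℝ ι, B *ᵥ v = t • v := by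
  obtain ⟨v₀, hv₀, -⟩ := h 1 one_pos
  obtain ⟨v, hv, hmin⟩ := (isCompact_stdSimplex ℝ ι).exists_isMinOn ⟨v₀, hv₀⟩
    (by fun_prop : Continuous fun v => ‖B *ᵥ v - t • v‖).continuousOn
  refine ⟨v, hv, sub_eq_zero.mp (norm_le_zero_iff.mp (le_of_forall_pos_le_add fun ε hε => ?_))⟩
  obtain ⟨w, hw, hwε⟩ := h ε hε
  simpa using (hmin hw).trans hwε

theorem exists_mem_stdSimplex_norm_mulVec_sub_smul_le {B : Matrix ι ι ℝ} {t ε : ℝ} (hε : 0 ≤ ε)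
    {x : ι → ℝ} (hx0 : 0 ≤ x) (hx : x ≠ 0) (h : |B *ᵥ x - t • x| ≤ ε • x) :
    ∃ v ∈ stdSimplex ℝ ι, ‖B *ᵥ v - t • v‖ ≤ ε := by
  set σ := ∑ i, x i
  have hσ : 0 < σ := by
    obtain ⟨k, hk⟩ := Function.ne_iff.mp hx
    exact Finset.sum_pos' (fun i _ => hx0 i) ⟨k, Finset.mem_univ k, (hx0 k).lt_of_ne' hk⟩
  refine ⟨σ⁻¹ • x, ⟨fun i => by simpa using mul_nonneg (inv_nonneg.mpr hσ.le) (hx0 i), ?_⟩, ?_⟩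
  · simp [← Finset.mul_sum, σ, inv_mul_cancel₀ hσ.ne']
  · rw [mulVec_smul, smul_comm, ← smul_sub, pi_norm_le_iff_of_nonneg hε]
    intro i
    have hxi : x i ≤ σ := Finset.single_le_sum (fun j _ => hx0 j) (Finset.mem_univ i)
    rw [Pi.smul_apply, norm_smul, norm_inv, Real.norm_eq_abs, Real.norm_eq_abs, abs_of_pos hσ,
      inv_mul_le_iff₀ hσ]
    calc |(B *ᵥ x - t • x) i| ≤ ε * x i := h i
      _ ≤ σ * ε := by nlinarith

theorem HasSuperinvariantVector.exists_eigenvalue_ge {B : Matrix ι ι ℝ}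
    (hB : ∀ i j, 0 ≤ B i j) {s : ℝ} (hs : B.HasSuperinvariantVector s) :
    ∃ t, s ≤ t ∧ ∃ v, v ≠ 0 ∧ B *ᵥ v = t • v := by
  set T := {t | B.HasSuperinvariantVector t}
  have hbdd : BddAbove T := ⟨_, fun t ht => ht.le_sum_entries hB⟩
  refine ⟨sSup T, le_csSup hbdd hs, ?_⟩
  suffices ∃ v ∈ stdSimplex ℝ ι, B *ᵥ v = sSup T • v by
    obtain ⟨v, hv, hBv⟩ := this
    exact ⟨v, fun h => by simpa [h] using hv.2, hBv⟩
  refine exists_mem_stdSimplex_mulVec_eq_smul B _ fun ε hε => ?_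
  obtain ⟨s', ⟨d, hd0, hdne, hdle⟩, hs'⟩ :=
    exists_lt_of_lt_csSup ⟨s, hs⟩ (sub_lt_self (sSup T) (half_pos hε))
  set t := sSup T + ε / 2 with ht_def
  have ht : ¬ B.HasSuperinvariantVector t := fun h =>
    (lt_add_of_pos_right _ (half_pos hε)).not_ge (le_csSup hbdd h)
  obtain ⟨x, hx⟩ := exists_smul_sub_mulVec_eq hB ht d
  have hx0 : 0 ≤ x := nonneg_of_not_hasSuperinvariantVector hB ht (hx ▸ hd0)
  -- `d` is superinvariant at level `s'` and `t - s'` is small, so `(tI - B)⁻¹ d` is large.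
  have hdx : d ≤ (t - s') • x := by
    refine sub_nonneg.mp (nonneg_of_not_hasSuperinvariantVector hB ht ?_)
    have : t • ((t - s') • x - d) - B *ᵥ ((t - s') • x - d) = B *ᵥ d - s' • d := by
      rw [mulVec_sub, mulVec_smul, ← hx]
      module
    simpa [this] using hdle
  refine exists_mem_stdSimplex_norm_mulVec_sub_smul_le hε.le hx0
    (fun h => hdne (le_antisymm (by simpa [h] using hdx) hd0)) fun i => ?_
  have hBx : (B *ᵥ x) i = t * x i - d i := by rw [← hx]; simp
  have hdi : d i ≤ (t - s') * x i := hdx i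
  have hd0i : 0 ≤ d i := hd0 i
  have hx0i : 0 ≤ x i := hx0 i
  have hts' : t - s' ≤ ε := by linarith
  simp only [Pi.abs_apply, Pi.sub_apply, Pi.smul_apply, smul_eq_mul, hBx]
  rw [abs_le]
  constructor <;> nlinarith

theorem eq_of_eq_posPart_add_mulVec {B : Matrix ι ι ℝ} (hB : ∀ i j, 0 ≤ B i j)
    (h1 : ¬ B.HasSuperinvariantVector 1) {q x y : ι → ℝ} (hx : x = (q + B *ᵥ x)⁺)
    (hy : y = (q + B *ᵥ y)⁺) : x = y := by
  have hsub : |x - y| ≤ B *ᵥ |x - y| :=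
    calc |x - y| = |(q + B *ᵥ x)⁺ - (q + B *ᵥ y)⁺| := by rw [← hx, ← hy]
      _ ≤ |(q + B *ᵥ x) - (q + B *ᵥ y)| := abs_sup_sub_sup_le_abs _ _ _
      _ = |B *ᵥ (x - y)| := by rw [add_sub_add_left_eq_sub, mulVec_sub]
      _ ≤ B *ᵥ |x - y| := abs_mulVec_le_mulVec_abs hB _
  by_contra hne
  exact h1 ⟨|x - y|, abs_nonneg _, by simpa [sub_eq_zero] using hne, by simpa using hsub⟩

theorem exists_eq_posPart_add_mulVec {B : Matrix ι ι ℝ} (hB : ∀ i j, 0 ≤ B i j)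
    (h1 : ¬ B.HasSuperinvariantVector 1) (q : ι → ℝ) : ∃ x, x = (q + B *ᵥ x)⁺ := by
  obtain ⟨u, hu⟩ := exists_smul_sub_mulVec_eq hB h1 q⁺
  have hu0 : 0 ≤ u := nonneg_of_not_hasSuperinvariantVector hB h1 (hu ▸ posPart_nonneg q)
  have hmono : Monotone fun y => (q + B *ᵥ y)⁺ := fun y z hyz =>
    posPart_mono (add_le_add le_rfl (mulVec_mono_of_nonneg hB hyz))
  have hsuper : (q + B *ᵥ u)⁺ ≤ u := by
    calc (q + B *ᵥ u)⁺ ≤ (q⁺ + B *ᵥ u)⁺ := posPart_mono (add_le_add (le_posPart q) le_rfl)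
      _ = u := by rw [← hu, one_smul, sub_add_cancel, posPart_eq_self.mpr hu0]
  obtain ⟨x, hx⟩ := hmono.exists_isFixedPt hu0 (posPart_nonneg _) hsuper
  exact ⟨x, hx.eq.symm⟩

theorem posPart_eq_posPart_add_mulVec {B : Matrix ι ι ℝ} {t : ℝ} (ht : 1 ≤ t) {v : ι → ℝ}
    (hv : B *ᵥ v = t • v) : v⁺ = (|v| - B *ᵥ v⁺ ⊔ B *ᵥ v⁻ + B *ᵥ v⁺)⁺ := by
  funext i
  have hdiff : (B *ᵥ v⁺) i - (B *ᵥ v⁻) i = t * v i := by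
    rw [← Pi.sub_apply, ← mulVec_sub, posPart_sub_negPart, hv, Pi.smul_apply, smul_eq_mul]
  simp only [Pi.posPart_apply, Pi.add_apply, Pi.sub_apply, Pi.sup_apply, Pi.abs_apply]
  generalize (B *ᵥ v⁺) i = a at hdiff ⊢
  generalize (B *ᵥ v⁻) i = b at hdiff ⊢
  simp only [posPart_def]
  rcases le_or_gt 0 (v i) with h | h
  · rw [abs_of_nonneg h, max_eq_left h, max_eq_left (show b ≤ a by nlinarith), sub_add_cancel,
      max_eq_left h]
  · rw [abs_of_neg h, max_eq_right h.le, max_eq_right (show a ≤ b by nlinarith),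
      max_eq_right (show -v i - b + a ≤ 0 by nlinarith)]

theorem exists_ne_eq_posPart_add_mulVec {B : Matrix ι ι ℝ} {t : ℝ} (ht : 1 ≤ t) {v : ι → ℝ}
    (hv0 : v ≠ 0) (hv : B *ᵥ v = t • v) :
    ∃ q x y : ι → ℝ, x ≠ y ∧ x = (q + B *ᵥ x)⁺ ∧ y = (q + B *ᵥ y)⁺ := by
  refine ⟨|v| - B *ᵥ v⁺ ⊔ B *ᵥ v⁻, v⁺, v⁻, fun h => hv0 ?_,
    posPart_eq_posPart_add_mulVec ht hv, ?_⟩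
  · rw [← posPart_sub_negPart v, h, sub_self]
  · have := posPart_eq_posPart_add_mulVec ht (v := -v) (by rw [mulVec_neg, hv, smul_neg])
    rwa [abs_neg, posPart_neg, negPart_neg, sup_comm] at this

end Matrix

theorem nashEq_iff_eq_posPart {n : ℕ} {G : Matrix (Fin n) (Fin n) ℝ} (hdiag : ∀ i, G i i = 0)
    {q x : Fin n → ℝ} : NashEq G q x ↔ x = (q + (-G) *ᵥ x)⁺ := by
  have hsum : ∀ i, ∑ j ∈ Finset.univ.erase i, G i j * x j = (G *ᵥ x) i := fun i => by
    rw [Finset.sum_erase_eq_sub (Finset.mem_univ i), hdiag, zero_mul, sub_zero]; rfl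
  simp only [NashEq, funext_iff, hsum, neg_mulVec, ← sub_eq_add_neg, Pi.posPart_apply,
    Pi.sub_apply]
  exact forall_congr' fun i => by rw [posPart_def, max_comm]

theorem unique_nash_iff_real_eig_gt_neg_one_Z_general (n : ℕ)
    (G : Matrix (Fin n) (Fin n) ℝ) (hdiag : ∀ i, G i i = 0)
    (hZ : ∀ i j, i ≠ j → G i j ≤ 0) :
    (∀ q : Fin n → ℝ, ∃! x : Fin n → ℝ, NashEq G q x) ↔
      (∀ μ : ℝ, HasRealEigenvalue G μ → -1 < μ) := by
  have hB : ∀ i j, 0 ≤ (-G) i j := fun i j => by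
    rcases eq_or_ne i j with rfl | hij
    · simp [hdiag]
    · simpa using hZ i j hij
  simp only [nashEq_iff_eq_posPart hdiag]
  constructor
  · rintro huniq μ ⟨v, hv0, hv⟩
    by_contra! hμ
    obtain ⟨q, x, y, hxy, hx, hy⟩ := exists_ne_eq_posPart_add_mulVec (t := -μ) (by linarith) hv0
      (by rw [neg_mulVec, hv, neg_smul])
    exact hxy ((huniq q).unique hx hy)
  · intro heig q
    have h1 : ¬ (-G).HasSuperinvariantVector 1 := fun h => by
      obtain ⟨t, ht, v, hv0, hv⟩ := h.exists_eigenvalue_ge hB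
      have := heig (-t) ⟨v, hv0, by rw [← neg_neg G, neg_mulVec, hv, neg_smul]⟩
      linarith
    obtain ⟨x, hx⟩ := exists_eq_posPart_add_mulVec hB h1 q
    exact ⟨x, hx, fun y hy => eq_of_eq_posPart_add_mulVec hB h1 hy hx⟩

theorem unique_nash_iff_real_eig_gt_neg_one_Z (n : ℕ) (hn : 1 ≤ n)
    (G : Matrix (Fin n) (Fin n) ℝ) (hdiag : ∀ i, G i i = 0)
    (hZ : ∀ i j, i ≠ j → G i j ≤ 0) :
    (∀ q : Fin n → ℝ, ∃! x : Fin n → ℝ, NashEq G q x) ↔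
      (∀ μ : ℝ, HasRealEigenvalue G μ → -1 < μ) :=
  unique_nash_iff_real_eig_gt_neg_one_Z_general n G hdiag hZ
end
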